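/- Let A be a commutative k-algebra, P a Rota-Baxter operator of weight λ on A, and P̃ the induced Rota-Baxter operator on the λ-Hurwitz series algebra A^ℕ. Then (A^ℕ, ∂_A, P̃) is a differential Rota-Baxter algebra of weight λ, i.e., ∂_A is a λ-derivation, P̃ is a Rota-Baxter operator of weight λ, and ∂_A ∘ P̃ = id. -/
import Mathlib


open Finset

/-- The `λ`-Hurwitz product over a `k`-module `M` with respect to a
multiplication `mul`. -/
def hmulG {k M : Type*} [CommRing k] [AddCommMonoid M] [Module k M]
    (lam : k) (mul : M → M → M) (f g : ℕ → M) : ℕ → M :=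
  fun n => ∑ i ∈ range (n + 1), ∑ j ∈ range (n - i + 1),
    (n.choose i * (n - i).choose j) • (lam ^ i • mul (f (n - j)) (g (i + j)))

/-- The `λ`-Hurwitz product on `A^ℕ` for a commutative `k`-algebra `A`. -/
def hmul {k A : Type*} [CommRing k] [CommRing A] [Algebra k A] (lam : k)
    (f g : ℕ → A) : ℕ → A :=
  hmulG lam (· * ·) f g

/-- The identity of the `λ`-Hurwitz series algebra. -/
def hone {A : Type*} [CommRing A] : ℕ → A := fun n => if n = 0 then 1 else 0

/-- The shift operator `∂_A`. -/
def hshift {A : Type*} (f : ℕ → A) : ℕ → A := fun n => f (n + 1)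

/-- The comultiplication-type map `δ_A`. -/
def hdel {M : Type*} (f : ℕ → M) : ℕ → ℕ → M := fun m n => f (m + n)

/-- The extension `P̃` of an operator `P` on `A` to `A^ℕ`:
`P̃(f)(0) = P (f 0)` and `P̃(f)(n) = f (n-1)` for `n ≥ 1`. -/
def hrbext {A : Type*} (P : A → A) (f : ℕ → A) : ℕ → A :=
  fun n => match n with
  | 0 => P (f 0)
  | n + 1 => f n


def Tc (n i j : ℕ) : ℕ := n.choose i * (n - i).choose j

lemma Tc_rec (n i j : ℕ) :
    Tc (n+1) i j
      = Tc n i j + (if j = 0 then 0 else Tc n i (j-1))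
        + (if i = 0 then 0 else Tc n (i-1) j) := by
  unfold Tc
  rcases i with _ | i
  · rcases j with _ | j
    · simp
    · simp [Nat.choose_succ_succ (n := n) (k := j)]
      ring
  · rcases Nat.lt_or_ge i n with h | h
    · have h1 : n + 1 - (i+1) = n - i := by omega
      have h2 : n - i = (n - (i+1)) + 1 := by omega
      rcases j with _ | j
      · simp [Nat.choose_succ_succ (n := n) (k := i), h1, h2]
        ring
      · simp only [Nat.choose_succ_succ (n := n) (k := i), h1, h2,
          Nat.choose_succ_succ, if_neg (Nat.succ_ne_zero j),
          if_neg (Nat.succ_ne_zero i), Nat.succ_sub_one]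
        ring
    · have h0 : n.choose (i+1) = 0 := Nat.choose_eq_zero_of_lt (by omega)
      have h1 : n + 1 - (i+1) = n - i := by omega
      simp [h0, h1]
      rcases Nat.eq_or_lt_of_le h with h | h
      · subst h; simp
      · simp [Nat.choose_eq_zero_of_lt (by omega : n < i),
          Nat.choose_eq_zero_of_lt (by omega : n + 1 < i + 1)]

lemma Tc_zero_right {n i j : ℕ} (h : n - i < j) : Tc n i j = 0 := by
  unfold Tc; rw [Nat.choose_eq_zero_of_lt h, mul_zero]

lemma hmul_rect {k A : Type*} [CommRing k] [CommRing A] [Algebra k A]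
    (lam : k) (f g : ℕ → A) (n M N : ℕ) (hM : n < M) (hN : n < N) :
    hmul lam f g n
      = ∑ i ∈ range M, ∑ j ∈ range N,
          Tc n i j • (lam ^ i • (f (n - j) * g (i + j))) := by
  unfold hmul hmulG Tc
  show (∑ i ∈ range (n+1), ∑ j ∈ range (n - i + 1),
      (n.choose i * (n - i).choose j) • (lam ^ i • (f (n - j) * g (i + j)))) = _
  have inner : ∀ i ∈ range (n+1),
      (∑ j ∈ range (n - i + 1),
          (n.choose i * (n - i).choose j) • (lam ^ i • (f (n - j) * g (i + j))))
      = ∑ j ∈ range N,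
          (n.choose i * (n - i).choose j) • (lam ^ i • (f (n - j) * g (i + j))) := by
    intro i hi
    have hi' : i ≤ n := Nat.lt_succ_iff.1 (Finset.mem_range.1 hi)
    apply Finset.sum_subset (Finset.range_subset_range.2 (show n - i + 1 ≤ N by omega))
    intro j _ hj
    have hj' : n - i < j := by
      rcases Nat.lt_or_ge (n - i) j with h | h
      · exact h
      · exact absurd (Finset.mem_range.2 (by omega)) hj
    rw [Nat.choose_eq_zero_of_lt hj', mul_zero, zero_smul]
  rw [Finset.sum_congr rfl inner]
  apply Finset.sum_subset (Finset.range_subset_range.2 (show n + 1 ≤ M by omega))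
  intro i _ hi
  have hi' : n < i := by
    rcases Nat.lt_or_ge n i with h | h
    · exact h
    · exact absurd (Finset.mem_range.2 (by omega)) hi
  apply Finset.sum_eq_zero
  intro j _
  rw [Nat.choose_eq_zero_of_lt hi', zero_mul, zero_smul]

lemma hmul_comm {k A : Type*} [CommRing k] [CommRing A] [Algebra k A]
    (lam : k) (f g : ℕ → A) : hmul lam f g = hmul lam g f := by
  funext n
  unfold hmul hmulG
  apply Finset.sum_congr rfl
  intro i hi
  conv_lhs => rw [← Finset.sum_range_reflect]
  apply Finset.sum_congr rfl
  intro j hj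
  have hi' : i ≤ n := Nat.lt_succ_iff.1 (Finset.mem_range.1 hi)
  have hj' : j ≤ n - i := Nat.lt_succ_iff.1 (Finset.mem_range.1 hj)
  have e1 : n - i + 1 - 1 - j = n - i - j := by omega
  have e2 : n - (n - i - j) = i + j := by omega
  have e3 : i + (n - i - j) = n - j := by omega
  rw [e1, e2, e3, Nat.choose_symm hj']
  show (n.choose i * (n - i).choose j) • (lam ^ i • (f (i + j) * g (n - j)))
    = (n.choose i * (n - i).choose j) • (lam ^ i • (g (n - j) * f (i + j)))
  rw [mul_comm (f (i + j))]

lemma hmul_deriv {k A : Type*} [CommRing k] [CommRing A] [Algebra k A]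
    (lam : k) (f g : ℕ → A) :
    hshift (hmul lam f g) =
      hmul lam (hshift f) g + hmul lam f (hshift g)
        + lam • hmul lam (hshift f) (hshift g) := by
  funext n
  show hmul lam f g (n+1) = _
  rw [hmul_rect lam f g (n+1) (n+2) (n+2) (by omega) (by omega)]
  have split :
      (∑ i ∈ range (n+2), ∑ j ∈ range (n+2),
        Tc (n+1) i j • (lam ^ i • (f (n+1-j) * g (i+j))))
      = (∑ i ∈ range (n+2), ∑ j ∈ range (n+2),
          Tc n i j • (lam ^ i • (f (n+1-j) * g (i+j))))
        + (∑ i ∈ range (n+2), ∑ j ∈ range (n+2),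
            if j = 0 then 0 else Tc n i (j-1) • (lam ^ i • (f (n+1-j) * g (i+j))))
        + (∑ i ∈ range (n+2), ∑ j ∈ range (n+2),
            if i = 0 then 0 else Tc n (i-1) j • (lam ^ i • (f (n+1-j) * g (i+j)))) := by
    rw [← Finset.sum_add_distrib, ← Finset.sum_add_distrib]
    apply Finset.sum_congr rfl; intro i _
    rw [← Finset.sum_add_distrib, ← Finset.sum_add_distrib]
    apply Finset.sum_congr rfl; intro j _
    rw [Tc_rec, add_smul, add_smul]
    congr 1
    · congr 1
      split <;> simp
    · split <;> simp
  rw [split]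
  congr 1
  · congr 1
    · rw [hmul_rect lam (hshift f) g n (n+2) (n+2) (by omega) (by omega)]
      apply Finset.sum_congr rfl; intro i _
      apply Finset.sum_congr rfl; intro j hj
      rcases Nat.lt_or_ge j (n+1) with h | h
      · have e : n + 1 - j = n - j + 1 := by omega
        rw [e]; rfl
      · rw [Tc_zero_right (show n - i < j by omega)]
        simp
    · rw [hmul_rect lam f (hshift g) n (n+2) (n+1) (by omega) (by omega)]
      apply Finset.sum_congr rfl; intro i _
      rw [Finset.sum_range_succ' _ (n+1)]
      simp only [if_neg (Nat.succ_ne_zero _), eq_self_iff_true, if_true, add_zero,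
        Nat.add_sub_cancel, Nat.succ_sub_succ, Nat.sub_zero]
      rfl
  · rw [Pi.smul_apply,
      hmul_rect lam (hshift f) (hshift g) n (n+1) (n+2) (by omega) (by omega),
      Finset.smul_sum, Finset.sum_range_succ' _ (n+1)]
    simp only [if_neg (Nat.succ_ne_zero _), eq_self_iff_true, if_true,
      Finset.sum_const_zero, add_zero, Nat.add_sub_cancel]
    apply Finset.sum_congr rfl; intro i _
    rw [Finset.smul_sum]
    apply Finset.sum_congr rfl; intro j hj
    rw [smul_comm lam (Tc n i j), ← mul_smul, ← pow_succ']
    rcases Nat.lt_or_ge j (n+1) with h | h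
    · have e : n + 1 - j = n - j + 1 := by omega
      have e2 : i + 1 + j = i + j + 1 := by omega
      rw [e, e2]; rfl
    · rw [Tc_zero_right (show n - i < j by omega)]
      simp

lemma hmul_zero' {k A : Type*} [CommRing k] [CommRing A] [Algebra k A]
    (lam : k) (f g : ℕ → A) : hmul lam f g 0 = f 0 * g 0 := by
  simp [hmul, hmulG]

lemma hshift_hrbext {A : Type*} (P : A → A) (f : ℕ → A) :
    hshift (hrbext P f) = f := by
  funext n; rfl

/-- `(A^ℕ, ∂_A, P̃)` is a differential Rota–Baxter algebra of weight `λ`: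
`∂_A` is a `λ`-derivation, `P̃` is a Rota–Baxter operator of weight `λ`, and
`∂_A ∘ P̃ = id`. -/
theorem hurwitz_differential_rota_baxter {k A : Type*} [CommRing k] [CommRing A]
    [Algebra k A] (lam : k) (P : A →ₗ[k] A)
    (hP : ∀ x y : A, P x * P y = P (x * P y) + P (y * P x) + lam • P (x * y)) :
    (∀ f g : ℕ → A,
      hshift (hmul lam f g) =
        hmul lam (hshift f) g + hmul lam f (hshift g)
          + lam • hmul lam (hshift f) (hshift g)) ∧
    hshift (hone (A := A)) = 0 ∧
    (∀ f g : ℕ → A,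
      hmul lam (hrbext P f) (hrbext P g) =
        hrbext P (hmul lam f (hrbext P g)) + hrbext P (hmul lam g (hrbext P f))
          + lam • hrbext P (hmul lam f g)) ∧
    (∀ f : ℕ → A, hshift (hrbext P f) = f) := by
  refine ⟨hmul_deriv lam, ?_, ?_, fun f => hshift_hrbext P f⟩
  · funext n; simp [hshift, hone]
  · intro f g
    funext n
    match n with
    | 0 =>
      show hmul lam (hrbext P f) (hrbext P g) 0 = _
      rw [hmul_zero']
      show P (f 0) * P (g 0)
        = P ((hmul lam f (hrbext P g)) 0) + P ((hmul lam g (hrbext P f)) 0)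
          + lam • P ((hmul lam f g) 0)
      rw [hmul_zero', hmul_zero', hmul_zero']
      exact hP (f 0) (g 0)
    | n + 1 =>
      show hmul lam (hrbext P f) (hrbext P g) (n+1) = _
      have h := congrFun (hmul_deriv lam (hrbext P f) (hrbext P g)) n
      rw [hshift_hrbext, hshift_hrbext] at h
      rw [show hmul lam (hrbext P f) (hrbext P g) (n+1)
            = hshift (hmul lam (hrbext P f) (hrbext P g)) n from rfl, h]
      show hmul lam f (hrbext P g) n + hmul lam (hrbext P f) g n
          + (lam • hmul lam f g) n
        = hmul lam f (hrbext P g) n + hmul lam g (hrbext P f) n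
          + (lam • hmul lam f g) n
      rw [hmul_comm lam (hrbext P f) g]
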